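/- arXiv:1808.03479 — 5 statements merged into one kernel-verified Lean document; each statement's English description precedes it below -/
import Mathlib

section
/- Let Λ be a finite index set, d ≥ 1, and let B i j ∈ M_d(ℂ) satisfy Σ_{i∈Λ} (B i j)ᴴ (B i j) = 1 for every j ∈ Λ. Fix any sequence of subsets S_1, S_2, … ⊆ Λ and for each j ∈ Λ and k ≥ 1 set a_k(j) := Σ_{i_1∈S_1} ⋯ Σ_{i_k∈S_k} (B_π)ᴴ B_π, where π = (j, i_1, …, i_k) and B_π = B i_k i_{k-1} ⋯ B i_1 j; set a_0(j) := 1. Then for every j ∈ Λ and every k ≥ 0 one has 0 ≤ a_{k+1}(j) ≤ a_k(j) ≤ 1 in the Loewner order; in particular, for each j the sequence (a_k(j))_{k≥0} is a decreasing sequence of positive semidefinite contractions. (This is the core of the paper's Lemma 3.1 and Lemma 4.3(i) on the existence of the limit operators b̄(n).) -/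
open Matrix
open scoped Classical ComplexOrder

/-- The path operator `B_π = B i_l i_{l-1} ⋯ B i_1 i_0` for a path
`π = (i_0, i_1, …, i_l)` in `Λ`. -/
noncomputable def pathOp {Λ : Type*} {d : ℕ} (B : Λ → Λ → Matrix (Fin d) (Fin d) ℂ)
    {l : ℕ} (π : Fin (l + 1) → Λ) : Matrix (Fin d) (Fin d) ℂ :=
  ((List.ofFn (fun k : Fin l => B (π k.succ) (π k.castSucc))).reverse).prod

/-- `a_k(j) = Σ_{i_1∈S_1} ⋯ Σ_{i_k∈S_k} (B_π)ᴴ B_π` with `π = (j, i_1, …, i_k)`;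
for `k = 0` this is `1`. -/
noncomputable def pathSum {Λ : Type*} [Fintype Λ] {d : ℕ}
    (B : Λ → Λ → Matrix (Fin d) (Fin d) ℂ) (S : ℕ → Finset Λ) (k : ℕ) (j : Λ) :
    Matrix (Fin d) (Fin d) ℂ :=
  ∑ i ∈ Finset.univ.filter (fun i : Fin k → Λ => ∀ t : Fin k, i t ∈ S (t.1 + 1)),
    (pathOp B (Fin.cons j i))ᴴ * pathOp B (Fin.cons j i)

lemma psd_sum {n : Type*} [Fintype n] {ι : Type*} (s : Finset ι)
    (f : ι → Matrix n n ℂ) (h : ∀ i ∈ s, (f i).PosSemidef) :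
    (∑ i ∈ s, f i).PosSemidef :=
  Finset.sum_induction f _ (fun _ _ ha hb => ha.add hb) .zero h

lemma pathOp_cons {Λ : Type*} {d : ℕ} (B : Λ → Λ → Matrix (Fin d) (Fin d) ℂ)
    {k : ℕ} (j : Λ) (i : Fin (k + 1) → Λ) :
    pathOp B (Fin.cons j i) = pathOp B i * B (i 0) j := by
  set π : Fin (k + 2) → Λ := Fin.cons j i with hπ
  have h1 : (fun t : Fin k => B (π t.succ.succ) (π t.succ.castSucc))
      = fun t : Fin k => B (i t.succ) (i t.castSucc) := by
    funext t
    have e1 : (t.succ.succ : Fin (k + 2)) = ((t.succ : Fin (k + 1)).succ) := rfl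
    have e2 : (t.succ.castSucc : Fin (k + 2)) = ((t.castSucc : Fin (k + 1)).succ) := by
      ext; simp
    rw [e1, e2, hπ, Fin.cons_succ, Fin.cons_succ]
  have h2 : π (Fin.succ 0) = i 0 := by
    rw [hπ]; exact Fin.cons_succ (α := fun _ : Fin (k + 2) => Λ) j i (0 : Fin (k + 1))
  have h3 : π (Fin.castSucc 0) = j := by rw [hπ]; rfl
  simp only [pathOp, List.ofFn_succ, List.reverse_cons, List.prod_append,
    List.prod_cons, List.prod_nil, mul_one, h1, h2, h3]

lemma pathSum_zero {Λ : Type*} [Fintype Λ] {d : ℕ}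
    (B : Λ → Λ → Matrix (Fin d) (Fin d) ℂ) (S : ℕ → Finset Λ) (j : Λ) :
    pathSum B S 0 j = 1 := by
  rw [pathSum]
  rw [Finset.filter_true_of_mem (by intro i _ t; exact t.elim0)]
  rw [Finset.sum_eq_single_of_mem (fun t => t.elim0) (Finset.mem_univ _)
    (by intro b _ hb; exact absurd (funext fun t => t.elim0) hb)]
  simp [pathOp]

lemma pathSum_succ {Λ : Type*} [Fintype Λ] {d : ℕ}
    (B : Λ → Λ → Matrix (Fin d) (Fin d) ℂ) (S : ℕ → Finset Λ) (k : ℕ) (j : Λ) :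
    pathSum B S (k + 1) j
      = ∑ m ∈ S 1, (B m j)ᴴ * pathSum B (fun n => S (n + 1)) k m * B m j := by
  classical
  have key : ∀ (m : Λ) (f : Fin k → Λ),
      pathOp B (Fin.cons j (Fin.cons m f)) = pathOp B (Fin.cons m f) * B m j := by
    intro m f
    have h := pathOp_cons B j (Fin.cons m f)
    rwa [Fin.cons_zero] at h
  rw [pathSum, Finset.sum_filter,
    ← Equiv.sum_comp (Fin.consEquiv (fun _ : Fin (k + 1) => Λ)), Fintype.sum_prod_type]
  have hRHS : ∑ m ∈ S 1, (B m j)ᴴ * pathSum B (fun n => S (n + 1)) k m * B m j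
      = ∑ m : Λ, if m ∈ S 1 then (B m j)ᴴ * pathSum B (fun n => S (n + 1)) k m * B m j
          else 0 := by
    rw [Finset.sum_ite_mem, Finset.univ_inter]
  rw [hRHS]
  refine Finset.sum_congr rfl fun m _ => ?_
  have hcond : ∀ f : Fin k → Λ,
      (∀ t : Fin (k + 1), (Fin.cons m f : Fin (k + 1) → Λ) t ∈ S (t.1 + 1))
        ↔ (m ∈ S 1 ∧ ∀ t : Fin k, f t ∈ S (t.1 + 1 + 1)) := by
    intro f
    rw [Fin.forall_fin_succ]
    simp [Fin.cons_succ]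
  by_cases hm : m ∈ S 1
  · simp only [hm, if_true]
    rw [pathSum, Finset.mul_sum, Finset.sum_mul, Finset.sum_filter]
    refine Finset.sum_congr rfl fun f _ => ?_
    have : (Fin.consEquiv (fun _ : Fin (k + 1) => Λ)) (m, f) = Fin.cons m f := rfl
    rw [this]
    rw [if_congr (hcond f) rfl rfl]
    simp only [hm, true_and]
    split
    · rw [key m f, conjTranspose_mul, mul_assoc, mul_assoc, mul_assoc]
    · simp
  · simp only [hm, if_false]
    refine Finset.sum_eq_zero fun f _ => ?_
    have : (Fin.consEquiv (fun _ : Fin (k + 1) => Λ)) (m, f) = Fin.cons m f := rfl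
    rw [this, if_congr (hcond f) rfl rfl, if_neg (by simp [hm])]

/-- Core of the paper's Lemma 3.1 and Lemma 4.3(i): the operators `a_k(j)` form a
decreasing sequence of positive semidefinite contractions,
`0 ≤ a_{k+1}(j) ≤ a_k(j) ≤ 1` in the Loewner order. -/
theorem lemma4_3_i {Λ : Type*} [Fintype Λ] {d : ℕ} (hd : 1 ≤ d)
    (B : Λ → Λ → Matrix (Fin d) (Fin d) ℂ)
    (hB : ∀ j : Λ, ∑ i : Λ, (B i j)ᴴ * B i j = 1)
    (S : ℕ → Finset Λ) :
    ∀ (j : Λ) (k : ℕ),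
      (pathSum B S k j).PosSemidef ∧
      (pathSum B S (k + 1) j).PosSemidef ∧
      (pathSum B S k j - pathSum B S (k + 1) j).PosSemidef ∧
      ((1 : Matrix (Fin d) (Fin d) ℂ) - pathSum B S k j).PosSemidef := by
  classical
  have A : ∀ (k : ℕ) (S : ℕ → Finset Λ) (j : Λ),
      (pathSum B S k j).PosSemidef ∧ ((1 : Matrix (Fin d) (Fin d) ℂ) - pathSum B S k j).PosSemidef := by
    intro k
    induction k with
    | zero =>
      intro S j
      rw [pathSum_zero]
      exact ⟨.one, by rw [sub_self]; exact .zero⟩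
    | succ k ih =>
      intro S j
      rw [pathSum_succ]
      constructor
      · exact psd_sum _ _ fun m _ => (ih _ m).1.conjTranspose_mul_mul_same (B m j)
      · have hsplit : (1 : Matrix (Fin d) (Fin d) ℂ)
            - ∑ m ∈ S 1, (B m j)ᴴ * pathSum B (fun n => S (n + 1)) k m * B m j
            = (∑ m ∈ Finset.univ \ S 1, (B m j)ᴴ * B m j)
              + ∑ m ∈ S 1,
                  (B m j)ᴴ * (1 - pathSum B (fun n => S (n + 1)) k m) * B m j := by
          symm
          have e1 : ∀ m ∈ S 1,
              (B m j)ᴴ * (1 - pathSum B (fun n => S (n + 1)) k m) * B m j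
                = (B m j)ᴴ * B m j
                  - (B m j)ᴴ * pathSum B (fun n => S (n + 1)) k m * B m j := by
            intro m _
            rw [mul_sub, sub_mul, mul_one]
          rw [Finset.sum_congr rfl e1, Finset.sum_sub_distrib, ← add_sub_assoc,
            Finset.sum_sdiff (Finset.subset_univ (S 1)), hB j]
        rw [hsplit]
        refine PosSemidef.add (psd_sum _ _ fun m _ => ?_) (psd_sum _ _ fun m _ => ?_)
        · exact posSemidef_conjTranspose_mul_self (B m j)
        · exact ((ih _ m).2).conjTranspose_mul_mul_same (B m j)
  have M : ∀ (k : ℕ) (S : ℕ → Finset Λ) (j : Λ),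
      (pathSum B S k j - pathSum B S (k + 1) j).PosSemidef := by
    intro k
    induction k with
    | zero =>
      intro S j
      rw [pathSum_zero]
      exact (A 1 S j).2
    | succ k ih =>
      intro S j
      rw [pathSum_succ B S k j, pathSum_succ B S (k + 1) j, ← Finset.sum_sub_distrib]
      refine psd_sum _ _ fun m _ => ?_
      have : (B m j)ᴴ * pathSum B (fun n => S (n + 1)) k m * B m j
            - (B m j)ᴴ * pathSum B (fun n => S (n + 1)) (k + 1) m * B m j
          = (B m j)ᴴ * (pathSum B (fun n => S (n + 1)) k m
              - pathSum B (fun n => S (n + 1)) (k + 1) m) * B m j := by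
        rw [mul_sub, sub_mul]
      rw [this]
      exact (ih _ m).conjTranspose_mul_mul_same (B m j)
  exact fun j k => ⟨(A k S j).1, (A (k + 1) S j).1, M k S j, (A k S j).2⟩
end

section
/- Let E : M_n(ℂ) → M_m(ℂ) be a linear map that is positive (it sends positive semidefinite matrices to positive semidefinite matrices) and satisfies the Schwarz inequality E(b)ᴴ E(b) ≤ E(bᴴ b) (Loewner order) for all b ∈ M_n(ℂ). Let p ∈ M_n(ℂ) be an orthogonal projection (pᴴ = p, p² = p) with E(1 − p) = 0. Then E(p a p) = E(a) for every a ∈ M_n(ℂ). (This is the paper's Theorem 3.5: a quantum Markov chain is reducible if and only if E_{0]}(I − p_{[n_0}) = 0 for some nontrivial projection; the statement here is its operative content for a completely positive map.) -/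
open Matrix
open scoped ComplexOrder

/-!
For a positive map `E` and any `b` with `E (bᴴ * b) = 0`, the positive matrices
`E ((b + t • c)ᴴ * (b + t • c)) = t • E (bᴴ * c + cᴴ * b) + t ^ 2 • E (cᴴ * c)`, `t : ℝ`,
force `E (bᴴ * c + cᴴ * b) = 0`; replacing `c` by `I • c` separates the two terms, so
`E (bᴴ * c) = E (c * b) = 0`. For `b = 1 - p` this kills every term but `E a` in
`p * a * p = a - (1 - p) * a - a * (1 - p) + (1 - p) * a * (1 - p)`.
-/

theorem Complex.eq_zero_of_forall_nonneg_ofReal_mul_add_sq_mul {a b : ℂ}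
    (h : ∀ t : ℝ, 0 ≤ t * a + t ^ 2 * b) : a = 0 := by
  have hpos : 0 ≤ a + b := by simpa using h 1
  have hneg : 0 ≤ -a + b := by simpa using h (-1)
  rw [Complex.nonneg_iff, Complex.add_im] at hpos
  rw [Complex.nonneg_iff, Complex.add_im, Complex.neg_im] at hneg
  have ha_im : a.im = 0 := by linarith [hpos.2, hneg.2]
  have hb_im : b.im = 0 := by linarith [hpos.2, hneg.2]
  have hdisc : discrim b.re a.re 0 ≤ 0 := discrim_le_zero fun t => by
    have := (Complex.nonneg_iff.mp (h t)).1
    simp only [pow_two, add_re, mul_re, ofReal_re, ofReal_im, ha_im, mul_zero, sub_zero, mul_im,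
      zero_mul, add_zero, hb_im] at this
    linarith
  refine Complex.ext ?_ ha_im
  rw [discrim, mul_zero, sub_zero] at hdisc
  simpa using pow_eq_zero_iff two_ne_zero |>.mp (le_antisymm hdisc (sq_nonneg _))

namespace Matrix

variable {n : Type*} [Fintype n]

theorem eq_zero_of_forall_dotProduct_mulVec_eq_zero {M : Matrix n n ℂ}
    (h : ∀ x : n → ℂ, star x ⬝ᵥ (M *ᵥ x) = 0) : M = 0 := by
  classical
  suffices hT : toEuclideanLin M = 0 from toEuclideanLin.injective (by simpa using hT)
  rw [← inner_map_self_eq_zero]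
  intro x
  simp only [toLpLin_apply, EuclideanSpace.inner_eq_star_dotProduct]
  rw [dotProduct_star, dotProduct_comm, h, star_zero]

theorem eq_zero_of_forall_posSemidef_smul_add_sq_smul {H K : Matrix n n ℂ}
    (h : ∀ t : ℝ, ((t : ℂ) • H + (t : ℂ) ^ 2 • K).PosSemidef) : H = 0 :=
  eq_zero_of_forall_dotProduct_mulVec_eq_zero fun x =>
    Complex.eq_zero_of_forall_nonneg_ofReal_mul_add_sq_mul fun t => by
      simpa only [add_mulVec, smul_mulVec, dotProduct_add, dotProduct_smul, smul_eq_mul]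
        using (h t).dotProduct_mulVec_nonneg x

end Matrix

namespace LinearMap

variable {n m : Type*} [Fintype n] [Fintype m] {E : Matrix n n ℂ →ₗ[ℂ] Matrix m m ℂ}
  {b : Matrix n n ℂ}

theorem map_conjTranspose_mul_add_eq_zero
    (hpos : ∀ a : Matrix n n ℂ, a.PosSemidef → (E a).PosSemidef) (hb : E (bᴴ * b) = 0)
    (c : Matrix n n ℂ) : E (bᴴ * c + cᴴ * b) = 0 := by
  refine eq_zero_of_forall_posSemidef_smul_add_sq_smul (K := E (cᴴ * c)) fun t => ?_
  have hexpand : (b + (t : ℂ) • c)ᴴ * (b + (t : ℂ) • c)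
      = bᴴ * b + (t : ℂ) • (bᴴ * c + cᴴ * b) + (t : ℂ) ^ 2 • (cᴴ * c) := by
    simp only [conjTranspose_add, conjTranspose_smul, Complex.star_def, Complex.conj_ofReal,
      add_mul, mul_add, Matrix.smul_mul, Matrix.mul_smul, smul_add, smul_smul, pow_two]
    abel
  simpa only [hexpand, map_add, _root_.map_smul, hb, zero_add] using
    hpos _ (posSemidef_conjTranspose_mul_self (b + (t : ℂ) • c))

theorem map_conjTranspose_mul_eq_zero
    (hpos : ∀ a : Matrix n n ℂ, a.PosSemidef → (E a).PosSemidef) (hb : E (bᴴ * b) = 0)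
    (c : Matrix n n ℂ) : E (bᴴ * c) = 0 := by
  have hc := map_conjTranspose_mul_add_eq_zero hpos hb c
  have hIc := map_conjTranspose_mul_add_eq_zero hpos hb (Complex.I • c)
  simp only [conjTranspose_smul, Complex.star_def, Complex.conj_I, Matrix.mul_smul, neg_smul,
    Matrix.neg_mul, Matrix.smul_mul, map_add, map_neg, _root_.map_smul] at hc hIc
  have hdiff : E (bᴴ * c) - E (cᴴ * b) = 0 := by
    refine (smul_eq_zero.mp ?_).resolve_left Complex.I_ne_zero
    rwa [smul_sub, sub_eq_add_neg]
  linear_combination (norm := module) (2⁻¹ : ℂ) • hc + (2⁻¹ : ℂ) • hdiff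

theorem map_mul_eq_zero
    (hpos : ∀ a : Matrix n n ℂ, a.PosSemidef → (E a).PosSemidef) (hb : E (bᴴ * b) = 0)
    (c : Matrix n n ℂ) : E (c * b) = 0 := by
  simpa [map_add, map_conjTranspose_mul_eq_zero hpos hb] using
    map_conjTranspose_mul_add_eq_zero hpos hb cᴴ

end LinearMap

theorem schwarz_reducing_general {n m : ℕ}
    (E : Matrix (Fin n) (Fin n) ℂ →ₗ[ℂ] Matrix (Fin m) (Fin m) ℂ)
    (hpos : ∀ a : Matrix (Fin n) (Fin n) ℂ, a.PosSemidef → (E a).PosSemidef)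
    (p : Matrix (Fin n) (Fin n) ℂ) (hp1 : pᴴ = p) (hp2 : p * p = p)
    (hEp : E (1 - p) = 0) :
    ∀ a : Matrix (Fin n) (Fin n) ℂ, E (p * a * p) = E a := by
  intro a
  have hsplit : p * a * p = a - (1 - p) * a - a * (1 - p) + (1 - p) * (a * (1 - p)) := by
    noncomm_ring
  set q := 1 - p
  have hq : IsStarProjection q := (isStarProjection_iff'.mpr ⟨hp2, hp1⟩).one_sub
  have hqq : E (qᴴ * q) = 0 := by
    rwa [← star_eq_conjTranspose, hq.isSelfAdjoint.star_eq, hq.isIdempotentElem.eq]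
  have hleft (c : Matrix (Fin n) (Fin n) ℂ) : E (q * c) = 0 := by
    simpa only [← star_eq_conjTranspose, hq.isSelfAdjoint.star_eq] using
      E.map_conjTranspose_mul_eq_zero hpos hqq c
  have hright (c : Matrix (Fin n) (Fin n) ℂ) : E (c * q) = 0 := E.map_mul_eq_zero hpos hqq c
  rw [hsplit, map_add, map_sub, map_sub, hleft, hleft, hright, sub_zero, sub_zero, add_zero]

/-- Operative content of the paper's Theorem 3.5: if a positive linear map `E`
satisfying the Schwarz inequality kills `1 - p` for an orthogonal projection `p`,
then `E(p a p) = E(a)` for all `a`. -/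
theorem schwarz_reducing {n m : ℕ}
    (E : Matrix (Fin n) (Fin n) ℂ →ₗ[ℂ] Matrix (Fin m) (Fin m) ℂ)
    (hpos : ∀ a : Matrix (Fin n) (Fin n) ℂ, a.PosSemidef → (E a).PosSemidef)
    (hschwarz : ∀ b : Matrix (Fin n) (Fin n) ℂ, (E (bᴴ * b) - (E b)ᴴ * (E b)).PosSemidef)
    (p : Matrix (Fin n) (Fin n) ℂ) (hp1 : pᴴ = p) (hp2 : p * p = p)
    (hEp : E (1 - p) = 0) :
    ∀ a : Matrix (Fin n) (Fin n) ℂ, E (p * a * p) = E a :=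
  schwarz_reducing_general E hpos p hp1 hp2 hEp
end

section
/- Let d ≥ 1 and let B, C ∈ M_d(ℂ) satisfy BᴴB + CᴴC = 1. Consider the nearest-neighbour OQRW on ℤ acting on families ρ = (ρ_i)_{i∈ℤ} of positive semidefinite matrices by M(ρ)_i = B ρ_{i+1} Bᴴ + C ρ_{i-1} Cᴴ. Assume that for every positive semidefinite x ∈ M_d(ℂ), Bᴴ x B = 0 and Cᴴ x C = 0 together imply x = 0. Then whenever every ρ_i is positive definite, every block M(ρ)_i is positive definite. (Paper's Proposition 5.3: under condition (5.2), 𝓜(ρ) is faithful whenever ρ is faithful, so the QMC associated with a faithful initial state is irreducible.) -/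
open Matrix
open scoped ComplexOrder

/-!
For `v ≠ 0`, `vᴴ M(ρ)_i v = (Bᴴv)ᴴ ρ_{i+1} (Bᴴv) + (Cᴴv)ᴴ ρ_{i-1} (Cᴴv)` is a sum of two
nonnegative terms, which by faithfulness of `ρ` both vanish only if `Bᴴv = 0` and `Cᴴv = 0`.
Condition (5.2) applied to the rank-one projector `x = v vᴴ` rules this out.
-/

namespace Matrix

variable {l m n R : Type*} [Fintype n]

theorem dotProduct_mul_mul_conjTranspose_mulVec [Fintype m] [CommRing R] [StarRing R]
    (X : Matrix m m R) (B : Matrix n m R) (v : n → R) :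
    star v ⬝ᵥ (B * X * Bᴴ) *ᵥ v = star (Bᴴ *ᵥ v) ⬝ᵥ X *ᵥ (Bᴴ *ᵥ v) := by
  simp only [← mulVec_mulVec, star_mulVec, conjTranspose_conjTranspose, dotProduct_mulVec,
    vecMul_vecMul]

variable [CommRing R] [PartialOrder R] [StarRing R] [StarOrderedRing R]

theorem PosDef.mul_mul_conjTranspose_add [Fintype l] [Fintype m]
    {X : Matrix m m R} {Y : Matrix l l R} (hX : X.PosDef) (hY : Y.PosDef) {B : Matrix n m R} {C : Matrix n l R}
    (hker : ∀ v, Bᴴ *ᵥ v = 0 → Cᴴ *ᵥ v = 0 → v = 0) :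
    (B * X * Bᴴ + C * Y * Cᴴ).PosDef := by
  have hBX := hX.posSemidef.mul_mul_conjTranspose_same B
  have hCY := hY.posSemidef.mul_mul_conjTranspose_same C
  refine PosDef.of_dotProduct_mulVec_pos (hBX.isHermitian.add hCY.isHermitian) fun v hv => ?_
  rw [add_mulVec, dotProduct_add]
  by_cases hB : Bᴴ *ᵥ v = 0
  · have hC : Cᴴ *ᵥ v ≠ 0 := fun hC => hv (hker v hB hC)
    refine add_pos_of_nonneg_of_pos (hBX.dotProduct_mulVec_nonneg v) ?_
    rw [dotProduct_mul_mul_conjTranspose_mulVec]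
    exact hY.dotProduct_mulVec_pos hC
  · refine add_pos_of_pos_of_nonneg ?_ (hCY.dotProduct_mulVec_nonneg v)
    rw [dotProduct_mul_mul_conjTranspose_mulVec]
    exact hX.dotProduct_mulVec_pos hB

theorem eq_zero_of_conjTranspose_mulVec_eq_zero [NoZeroDivisors R] {B : Matrix n m R} {C : Matrix n l R}
    (hsep : ∀ x : Matrix n n R, x.PosSemidef → Bᴴ * x * B = 0 → Cᴴ * x * C = 0 → x = 0)
    {v : n → R} (hB : Bᴴ *ᵥ v = 0) (hC : Cᴴ *ᵥ v = 0) : v = 0 := by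
  have hx := hsep (vecMulVec v (star v)) (posSemidef_vecMulVec_self_star v)
    (by rw [mul_vecMulVec, vecMulVec_mul, hB, zero_vecMulVec])
    (by rw [mul_vecMulVec, vecMulVec_mul, hC, zero_vecMulVec])
  rcases vecMulVec_eq_zero.mp hx with h | h
  · exact h
  · exact star_eq_zero.mp h

end Matrix

theorem prop5_3_general {d : ℕ}
    (B C : Matrix (Fin d) (Fin d) ℂ)
    (hcond : ∀ x : Matrix (Fin d) (Fin d) ℂ,
      x.PosSemidef → Bᴴ * x * B = 0 → Cᴴ * x * C = 0 → x = 0)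
    (M : (ℤ → Matrix (Fin d) (Fin d) ℂ) → ℤ → Matrix (Fin d) (Fin d) ℂ)
    (hM : ∀ ρ i, M ρ i = B * ρ (i + 1) * Bᴴ + C * ρ (i - 1) * Cᴴ) :
    ∀ ρ : ℤ → Matrix (Fin d) (Fin d) ℂ,
      (∀ i, (ρ i).PosSemidef) → (∀ i, (ρ i).PosDef) → ∀ i, (M ρ i).PosDef := by
  intro ρ _ hρ i
  rw [hM]
  exact (hρ (i + 1)).mul_mul_conjTranspose_add (hρ (i - 1))
    fun _ hB hC => eq_zero_of_conjTranspose_mulVec_eq_zero hcond hB hC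

/-- Paper's Proposition 5.3: for the nearest-neighbour OQRW on ℤ,
`M(ρ)_i = B ρ_{i+1} Bᴴ + C ρ_{i-1} Cᴴ`, if `BᴴxB = 0` and `CᴴxC = 0` force `x = 0`
for positive semidefinite `x`, then `M(ρ)` is faithful whenever `ρ` is faithful. -/
theorem prop5_3 {d : ℕ} (hd : 1 ≤ d)
    (B C : Matrix (Fin d) (Fin d) ℂ)
    (hBC : Bᴴ * B + Cᴴ * C = 1)
    (hcond : ∀ x : Matrix (Fin d) (Fin d) ℂ,
      x.PosSemidef → Bᴴ * x * B = 0 → Cᴴ * x * C = 0 → x = 0)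
    (M : (ℤ → Matrix (Fin d) (Fin d) ℂ) → ℤ → Matrix (Fin d) (Fin d) ℂ)
    (hM : ∀ ρ i, M ρ i = B * ρ (i + 1) * Bᴴ + C * ρ (i - 1) * Cᴴ) :
    ∀ ρ : ℤ → Matrix (Fin d) (Fin d) ℂ,
      (∀ i, (ρ i).PosSemidef) → (∀ i, (ρ i).PosDef) → ∀ i, (M ρ i).PosDef :=
  prop5_3_general B C hcond M hM
end

section
/- Let Λ be a finite index set, d ≥ 1, B i j ∈ M_d(ℂ) with Σ_{i∈Λ} (B i j)ᴴ (B i j) = 1 for each j, and let ρ = (ρ_i) be a block state. Fix k ≥ 1 and j ∈ Λ, and suppose p ∈ M_d(ℂ) is an orthogonal projection with (M^k(ρ))_j · p = (M^k(ρ))_j. Then for every path π = (i_0, i_1, …, i_k) with i_k = j one has (1 − p) · B_π ρ_{i_0} (B_π)ᴴ · (1 − p) = 0, and consequently B_π ρ_{i_0} (B_π)ᴴ · p = B_π ρ_{i_0} (B_π)ᴴ. (This is the key computation in the converse direction of the Appendix, showing that reducibility of the quantum Markov chain implies reducibility of the OQRW in the sense of Carbone–Pautrat.) -/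
/-!
The path `π` contributes one positive term to the expansion of `(M^k ρ)_j`, so
`0 ≤ B_π ρ_{i_0} B_πᴴ ≤ (M^k ρ)_j` in the Loewner order. Compressing by the self-adjoint
`1 - p`, which annihilates `(M^k ρ)_j`, squeezes `(1 - p) B_π ρ_{i_0} B_πᴴ (1 - p)` to `0`.
Writing `B_π ρ_{i_0} B_πᴴ = s * s` with `s` self-adjoint, this says `(s (1 - p))ᴴ (s (1 - p)) = 0`,
so `s (1 - p) = 0` and hence `B_π ρ_{i_0} B_πᴴ (1 - p) = 0`.
-/

open Matrix
open scoped ComplexOrder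

section LoewnerOrder

open scoped MatrixOrder

theorem IsSelfAdjoint.one_sub_conjugate_eq_zero {R : Type*} [Ring R] [PartialOrder R]
    [StarRing R] [StarOrderedRing R] {x y p : R} (hx : 0 ≤ x) (hxy : x ≤ y)
    (hp : IsSelfAdjoint p) (hyp : y * p = y) : (1 - p) * x * (1 - p) = 0 := by
  have hq : IsSelfAdjoint (1 - p) := (IsSelfAdjoint.one R).sub hp
  have hpy : p * y = y := by
    simpa [hp.star_eq, (IsSelfAdjoint.of_nonneg (hx.trans hxy)).star_eq] using congr(star $hyp)
  have hy : (1 - p) * y * (1 - p) = 0 := by rw [sub_mul, one_mul, hpy, sub_self, zero_mul]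
  exact le_antisymm (hy ▸ hq.conjugate_le_conjugate hxy) (hq.conjugate_nonneg hx)

theorem Matrix.mul_eq_zero_of_conjugate_eq_zero {n 𝕜 : Type*} [Fintype n] [DecidableEq n]
    [RCLike 𝕜] {x q : Matrix n n 𝕜} (hx : 0 ≤ x) (hq : IsSelfAdjoint q) (h : q * x * q = 0) :
    x * q = 0 := by
  obtain ⟨s, hs, hss⟩ : ∃ s, IsSelfAdjoint s ∧ s * s = x :=
    ⟨CFC.sqrt x, .of_nonneg (CFC.sqrt_nonneg x), CFC.sqrt_mul_sqrt_self x hx⟩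
  have hsq : s * q = 0 := by
    rw [← conjTranspose_mul_self_eq_zero, conjTranspose_mul, ← star_eq_conjTranspose,
      ← star_eq_conjTranspose, hq.star_eq, hs.star_eq]
    simpa only [mul_assoc, ← mul_assoc s s, hss] using h
  rw [← hss, mul_assoc, hsq, mul_zero]

section OpenQuantumRandomWalk

variable {Λ n 𝕜 : Type*} [Fintype Λ] [Fintype n] [RCLike 𝕜]

noncomputable def oqrwMap (B : Λ → Λ → Matrix n n 𝕜) (σ : Λ → Matrix n n 𝕜) (i : Λ) :
    Matrix n n 𝕜 :=
  ∑ j, B i j * σ j * (B i j)ᴴ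

theorem oqrwMap_nonneg (B : Λ → Λ → Matrix n n 𝕜) {σ : Λ → Matrix n n 𝕜} (hσ : ∀ j, 0 ≤ σ j)
    (i : Λ) : 0 ≤ oqrwMap B σ i :=
  Finset.sum_nonneg fun j _ => star_right_conjugate_nonneg (hσ j) (B i j)

theorem iterate_oqrwMap_nonneg (B : Λ → Λ → Matrix n n 𝕜) {σ : Λ → Matrix n n 𝕜}
    (hσ : ∀ j, 0 ≤ σ j) (l : ℕ) (i : Λ) : 0 ≤ (oqrwMap B)^[l] σ i := by
  induction l generalizing i with
  | zero => exact hσ i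
  | succ l ih =>
    rw [Function.iterate_succ_apply']
    exact oqrwMap_nonneg B ih i

theorem conjugate_le_oqrwMap (B : Λ → Λ → Matrix n n 𝕜) {σ : Λ → Matrix n n 𝕜}
    (hσ : ∀ j, 0 ≤ σ j) (i j : Λ) : B i j * σ j * (B i j)ᴴ ≤ oqrwMap B σ i :=
  Finset.single_le_sum (f := fun j => B i j * σ j * (B i j)ᴴ)
    (fun j _ => star_right_conjugate_nonneg (hσ j) (B i j)) (Finset.mem_univ j)

end OpenQuantumRandomWalk

section PathOperator

variable {Λ : Type*} {d : ℕ} (B : Λ → Λ → Matrix (Fin d) (Fin d) ℂ)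

theorem pathOp_zero (π : Fin 1 → Λ) : pathOp B π = 1 := by
  simp [pathOp]

theorem pathOp_succ {l : ℕ} (π : Fin (l + 2) → Λ) :
    pathOp B π = B (π (Fin.last (l + 1))) (π (Fin.last l).castSucc) * pathOp B (Fin.init π) := by
  simp only [pathOp, List.ofFn_succ', List.concat_eq_append, List.reverse_append,
    List.reverse_cons, List.reverse_nil, List.nil_append, List.singleton_append, List.prod_cons,
    Fin.succ_last]
  rfl

theorem pathOp_conjugate_le_iterate_oqrwMap [Fintype Λ] {ρ : Λ → Matrix (Fin d) (Fin d) ℂ}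
    (hρ : ∀ j, 0 ≤ ρ j) {l : ℕ} (π : Fin (l + 1) → Λ) :
    pathOp B π * ρ (π 0) * (pathOp B π)ᴴ ≤ (oqrwMap B)^[l] ρ (π (Fin.last l)) := by
  induction l with
  | zero => simp [pathOp_zero]
  | succ l ih =>
    set a := π (Fin.last (l + 1))
    set b := π (Fin.last l).castSucc
    calc pathOp B π * ρ (π 0) * (pathOp B π)ᴴ
        = B a b * (pathOp B (Fin.init π) * ρ (Fin.init π 0) * (pathOp B (Fin.init π))ᴴ)
            * (B a b)ᴴ := by
          simp only [pathOp_succ, conjTranspose_mul, Fin.init, Fin.castSucc_zero, mul_assoc]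
          rfl
      _ ≤ B a b * (oqrwMap B)^[l] ρ b * (B a b)ᴴ := star_right_conjugate_le_conjugate (ih _) _
      _ ≤ (oqrwMap B)^[l + 1] ρ a := by
          rw [Function.iterate_succ_apply']
          exact conjugate_le_oqrwMap B (iterate_oqrwMap_nonneg B hρ l) a b

end PathOperator

end LoewnerOrder

theorem appendix_converse_step_general {Λ : Type*} [Fintype Λ] {d : ℕ}
    (B : Λ → Λ → Matrix (Fin d) (Fin d) ℂ)
    (ρ : Λ → Matrix (Fin d) (Fin d) ℂ)
    (hρ : ∀ j, (ρ j).PosSemidef)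
    (M : (Λ → Matrix (Fin d) (Fin d) ℂ) → Λ → Matrix (Fin d) (Fin d) ℂ)
    (hM : ∀ σ i, M σ i = ∑ j : Λ, B i j * σ j * (B i j)ᴴ)
    (k : ℕ) (j : Λ)
    (p : Matrix (Fin d) (Fin d) ℂ) (hp1 : pᴴ = p)
    (hjp : (M^[k] ρ) j * p = (M^[k] ρ) j) :
    ∀ π : Fin (k + 1) → Λ, π (Fin.last k) = j →
      (1 - p) * (pathOp B π * ρ (π 0) * (pathOp B π)ᴴ) * (1 - p) = 0 ∧
      pathOp B π * ρ (π 0) * (pathOp B π)ᴴ * p = pathOp B π * ρ (π 0) * (pathOp B π)ᴴ := by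
  open scoped MatrixOrder in
  intro π hπ
  have hM' : M = oqrwMap B := funext fun σ => funext (hM σ)
  have hX : 0 ≤ pathOp B π * ρ (π 0) * (pathOp B π)ᴴ :=
    ((hρ (π 0)).mul_mul_conjTranspose_same _).nonneg
  have hXN := pathOp_conjugate_le_iterate_oqrwMap B (fun j => (hρ j).nonneg) π
  rw [← hM', hπ] at hXN
  have hp : IsSelfAdjoint p := hp1
  have hzero := hp.one_sub_conjugate_eq_zero hX hXN hjp
  refine ⟨hzero, ?_⟩
  have hXq := mul_eq_zero_of_conjugate_eq_zero hX ((IsSelfAdjoint.one _).sub hp) hzero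
  rwa [mul_sub, mul_one, sub_eq_zero, eq_comm] at hXq

/-- Key computation in the converse direction of the Appendix: if
`(M^k ρ)_j p = (M^k ρ)_j` for an orthogonal projection `p`, then for every path `π`
ending at `j`, `(1-p) B_π ρ_{i_0} B_πᴴ (1-p) = 0` and `B_π ρ_{i_0} B_πᴴ p = B_π ρ_{i_0} B_πᴴ`. -/
theorem appendix_converse_step {Λ : Type*} [Fintype Λ] {d : ℕ} (hd : 1 ≤ d)
    (B : Λ → Λ → Matrix (Fin d) (Fin d) ℂ)
    (hB : ∀ j : Λ, ∑ i : Λ, (B i j)ᴴ * B i j = 1)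
    (ρ : Λ → Matrix (Fin d) (Fin d) ℂ)
    (hρ : ∀ j, (ρ j).PosSemidef)
    (htr : ∑ j, (ρ j).trace = 1)
    (M : (Λ → Matrix (Fin d) (Fin d) ℂ) → Λ → Matrix (Fin d) (Fin d) ℂ)
    (hM : ∀ σ i, M σ i = ∑ j : Λ, B i j * σ j * (B i j)ᴴ)
    (k : ℕ) (hk : 1 ≤ k) (j : Λ)
    (p : Matrix (Fin d) (Fin d) ℂ) (hp1 : pᴴ = p) (hp2 : p * p = p)
    (hjp : (M^[k] ρ) j * p = (M^[k] ρ) j) :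
    ∀ π : Fin (k + 1) → Λ, π (Fin.last k) = j →
      (1 - p) * (pathOp B π * ρ (π 0) * (pathOp B π)ᴴ) * (1 - p) = 0 ∧
      pathOp B π * ρ (π 0) * (pathOp B π)ᴴ * p = pathOp B π * ρ (π 0) * (pathOp B π)ᴴ :=
  appendix_converse_step_general B ρ hρ M hM k j p hp1 hjp
end

section
/- Let Λ be a finite index set, d ≥ 1, B i j ∈ M_d(ℂ) with Σ_{i∈Λ} (B i j)ᴴ (B i j) = 1 for each j, and let ρ = (ρ_{i})_{i∈Λ} be a block state. Then for every n ≥ 0 and every family x = (x_i)_{i∈Λ} of matrices in M_d(ℂ): Σ_{i∈Λ} Tr( (Mⁿ(ρ))_i · x_i ) = Σ_{i_0, i_1, …, i_n ∈ Λ} Tr( B_π · ρ_{i_0} · (B_π)ᴴ · x_{i_n} ), where π = (i_0, i_1, …, i_n) and B_π = B i_n i_{n-1} ⋯ B i_1 i_0. (This path expansion underlies the paper's Proposition 4.5: the quantum Markov chain ρ evaluated at I ⊗ ⋯ ⊗ I ⊗ x ⊗ I ⊗ ⋯ with x in the n-th slot equals ρ^{(n)}(x) = Tr(Mⁿ(ρ^{(0)})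 x), i.e. the QMC recovers the OQRW dynamics.) -/
open Matrix
open scoped ComplexOrder

lemma pathOp_succ_aux {Λ : Type*} {d : ℕ} (B : Λ → Λ → Matrix (Fin d) (Fin d) ℂ)
    {l : ℕ} (π : Fin (l + 2) → Λ) :
    pathOp B π = pathOp B (Fin.tail π) * B (π 1) (π 0) := by
  unfold pathOp
  rw [List.ofFn_succ, List.reverse_cons, List.prod_append, List.prod_singleton]
  congr 2

lemma path_expansion_aux {Λ : Type*} [Fintype Λ] [DecidableEq Λ] {d : ℕ}
    (B : Λ → Λ → Matrix (Fin d) (Fin d) ℂ)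
    (M : (Λ → Matrix (Fin d) (Fin d) ℂ) → Λ → Matrix (Fin d) (Fin d) ℂ)
    (hM : ∀ σ i, M σ i = ∑ j : Λ, B i j * σ j * (B i j)ᴴ) :
    ∀ (n : ℕ) (ρ x : Λ → Matrix (Fin d) (Fin d) ℂ),
      ∑ i : Λ, ((M^[n] ρ) i * x i).trace
      = ∑ π : Fin (n + 1) → Λ,
          (pathOp B π * ρ (π 0) * (pathOp B π)ᴴ * x (π (Fin.last n))).trace := by
  intro n
  induction n with
  | zero =>
    intro ρ x
    rw [← (Equiv.funUnique (Fin 1) Λ).symm.sum_comp]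
    simp [pathOp, Fin.last]
  | succ n ih =>
    intro ρ x
    rw [Function.iterate_succ_apply, ih (M ρ) x]
    rw [← (Fin.consEquiv (fun _ : Fin (n + 2) => Λ)).sum_comp]
    rw [Fintype.sum_prod_type, Finset.sum_comm]
    refine Finset.sum_congr rfl fun τ _ => ?_
    rw [hM]
    simp only [Finset.mul_sum, Finset.sum_mul, Matrix.trace_sum]
    refine Finset.sum_congr rfl fun j _ => ?_
    have h1 : pathOp B (Fin.consEquiv (fun _ : Fin (n + 2) => Λ) (j, τ))
        = pathOp B τ * B (τ 0) j := by
      rw [pathOp_succ_aux]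
      simp [Fin.consEquiv, Fin.tail_cons]
    have h0 : (Fin.consEquiv (fun _ : Fin (n + 2) => Λ) (j, τ)) 0 = j := rfl
    have hl : (Fin.consEquiv (fun _ : Fin (n + 2) => Λ) (j, τ)) (Fin.last (n + 1))
        = τ (Fin.last n) := by
      rw [show Fin.last (n + 1) = (Fin.last n).succ from rfl]
      simp only [Fin.consEquiv_apply, Fin.cons_succ]
    rw [h1, h0, hl]
    simp only [Matrix.conjTranspose_mul, Matrix.mul_assoc]

/-- Path expansion underlying the paper's Proposition 4.5: the quantum Markov chain
recovers the OQRW dynamics,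
`Σ_i Tr((Mⁿρ)_i x_i) = Σ_{i_0,…,i_n} Tr(B_π ρ_{i_0} B_πᴴ x_{i_n})`. -/
theorem prop4_5_path_expansion {Λ : Type*} [Fintype Λ] [DecidableEq Λ] {d : ℕ} (hd : 1 ≤ d)
    (B : Λ → Λ → Matrix (Fin d) (Fin d) ℂ)
    (hB : ∀ j : Λ, ∑ i : Λ, (B i j)ᴴ * B i j = 1)
    (ρ : Λ → Matrix (Fin d) (Fin d) ℂ)
    (hρ : ∀ j, (ρ j).PosSemidef)
    (htr : ∑ j, (ρ j).trace = 1)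
    (M : (Λ → Matrix (Fin d) (Fin d) ℂ) → Λ → Matrix (Fin d) (Fin d) ℂ)
    (hM : ∀ σ i, M σ i = ∑ j : Λ, B i j * σ j * (B i j)ᴴ) :
    ∀ (n : ℕ) (x : Λ → Matrix (Fin d) (Fin d) ℂ),
      ∑ i : Λ, ((M^[n] ρ) i * x i).trace
      = ∑ π : Fin (n + 1) → Λ,
          (pathOp B π * ρ (π 0) * (pathOp B π)ᴴ * x (π (Fin.last n))).trace := by
  intro n x
  exact path_expansion_aux B M hM n ρ x
end
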